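/- Let N ≥ 1 and Q ≥ 1 be integers, and let ψ: ℤ/Nℤ → ℝ be a function all of whose values lie in (2π/Q)ℤ. Let M ≥ 1 be a real number such that ‖e^{inψ}‖_{A(𝕋_N)} ≤ M for every integer n with 0 ≤ n ≤ Q−1. Then the set E = {(x,y,z) ∈ (ℤ/Nℤ)³ : ψ(x)+ψ(z−x)−ψ(y)−ψ(z−y) ∈ 2πℤ} satisfies card(E)/N³ ≥ 1/M². -/

import Mathlib

/-!
Write `θ(x, y, z) = ψ x + ψ (z - x) - ψ y - ψ (z - y)` and `fₙ = e^{inψ}`. Since `θ` takes values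
in `(2π/Q)ℤ`, the average of `e^{inθ}` over `0 ≤ n < Q` is the indicator of `E`, and
`∑_{x,y,z} e^{inθ(x,y,z)} = ‖fₙ ∗ fₙ‖₂²`; hence `Q · |E| = ∑_{n<Q} ‖fₙ ∗ fₙ‖₂²`.
By Parseval and the convolution theorem `‖f ∗ f‖₂² = N³ ∑ₖ |f̂ k|⁴`, while for unimodular `f`
we have `∑ₖ |f̂ k|² = 1`, so the interpolation inequality
`(∑ |f̂|²)³ ≤ (∑ |f̂|)² ∑ |f̂|⁴` gives `‖fₙ ∗ fₙ‖₂² ≥ N³ / ‖fₙ‖²_A ≥ N³ / M²` for every `n < Q`.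
-/

open scoped Real
open Complex Filter

/-- The Fourier transform on the cyclic group `ℤ/Nℤ`. -/
noncomputable def dftN (N : ℕ) [NeZero N] (g : ZMod N → ℂ) (k : ZMod N) : ℂ :=
  (1 / (N : ℂ)) * ∑ j : ZMod N,
    g j * Complex.exp (-(2 * (π : ℂ) * Complex.I) * (j.val : ℂ) * (k.val : ℂ) / (N : ℂ))

/-- The `A(𝕋_N)` norm on the cyclic group `ℤ/Nℤ`. -/
noncomputable def normAN (N : ℕ) [NeZero N] (g : ZMod N → ℂ) : ℝ :=
  ∑ k : ZMod N, ‖dftN N g k‖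

open Finset ZMod ComplexConjugate

open Classical in
lemma sum_range_exp_mul_I_eq_ite (Q : ℕ) {t : ℝ} (ht : ∃ m : ℤ, t = 2 * π / Q * m) :
    ∑ n ∈ range Q, exp (I * n * t) = if ∃ k : ℤ, t = 2 * π * k then (Q : ℂ) else 0 := by
  have hpow : ∀ n : ℕ, exp (I * n * t) = exp (I * t) ^ n := fun n => by
    rw [← exp_nat_mul]; ring_nf
  simp only [hpow]
  split_ifs with h
  · obtain ⟨k, rfl⟩ := h
    have : exp (I * ↑(2 * π * k)) = 1 := by
      rw [← exp_int_mul_two_pi_mul_I k]; push_cast; ring_nf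
    simp only [this, one_pow, sum_const, card_range, nsmul_eq_mul, mul_one]
  · have hne : exp (I * t) ≠ 1 := fun h1 => by
      obtain ⟨k, hk⟩ := exp_eq_one_iff.1 h1
      refine h ⟨k, ofReal_injective ?_⟩
      push_cast
      linear_combination (-I) * hk + (t - 2 * π * k : ℂ) * I_sq
    have hQ : exp (I * t) ^ Q = 1 := by
      obtain ⟨m, rfl⟩ := ht
      rcases Q.eq_zero_or_pos with rfl | hQ
      · rfl
      have : (Q : ℂ) ≠ 0 := Nat.cast_ne_zero.2 hQ.ne'
      rw [← exp_nat_mul, ← exp_int_mul_two_pi_mul_I m]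
      push_cast
      field_simp
    rw [geom_sum_eq hne, hQ, sub_self, zero_div]

theorem natCast_mul_ncard_eq_sum_exp {α : Type*} [Fintype α] (Q : ℕ) (θ : α → ℝ)
    (hθ : ∀ p, ∃ m : ℤ, θ p = 2 * π / Q * m) :
    ((Q * {p | ∃ k : ℤ, θ p = 2 * π * k}.ncard : ℕ) : ℂ)
      = ∑ n ∈ range Q, ∑ p, exp (I * n * θ p) := by
  classical
  rw [sum_comm, Set.ncard_eq_toFinset_card']
  simp only [sum_range_exp_mul_I_eq_ite Q (hθ _), sum_ite, sum_const_zero, add_zero, sum_const,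
    nsmul_eq_mul, Set.toFinset_ofPred]
  push_cast
  ring

lemma sum_sq_pow_three_le_sq_sum_mul_sum_pow_four {ι : Type*} (s : Finset ι) {b : ι → ℝ}
    (hb : ∀ i ∈ s, 0 ≤ b i) :
    (∑ i ∈ s, b i ^ 2) ^ 3 ≤ (∑ i ∈ s, b i) ^ 2 * ∑ i ∈ s, b i ^ 4 := by
  set A := ∑ i ∈ s, b i
  set B := ∑ i ∈ s, b i ^ 2
  set C := ∑ i ∈ s, b i ^ 3
  set D := ∑ i ∈ s, b i ^ 4
  have hB : 0 ≤ B := sum_nonneg fun i hi => pow_nonneg (hb i hi) 2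
  have hD : 0 ≤ D := sum_nonneg fun i hi => pow_nonneg (hb i hi) 4
  have hBAC : B ^ 2 ≤ A * C := sum_sq_le_sum_mul_sum_of_sq_le_mul s hb
    (fun i hi => pow_nonneg (hb i hi) 3) fun i _ => le_of_eq (by ring)
  have hCBD : C ^ 2 ≤ B * D := sum_sq_le_sum_mul_sum_of_sq_le_mul s
    (fun i hi => pow_nonneg (hb i hi) 2) (fun i hi => pow_nonneg (hb i hi) 4) fun i _ =>
      le_of_eq (by ring)
  rcases hB.eq_or_lt with hB0 | hBpos
  · rw [← hB0, zero_pow three_ne_zero]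
    exact mul_nonneg (sq_nonneg A) hD
  refine le_of_mul_le_mul_left ?_ hBpos
  calc B * B ^ 3 = (B ^ 2) ^ 2 := by ring
    _ ≤ (A * C) ^ 2 := pow_le_pow_left₀ (sq_nonneg B) hBAC 2
    _ = A ^ 2 * C ^ 2 := by ring
    _ ≤ A ^ 2 * (B * D) := mul_le_mul_of_nonneg_left hCBD (sq_nonneg A)
    _ = B * (A ^ 2 * D) := by ring

section Convolution

variable {G : Type*} [AddCommGroup G]

def energyPhase (ψ : G → ℝ) (p : G × G × G) : ℝ :=
  ψ p.1 + ψ (p.2.2 - p.1) - ψ p.2.1 - ψ (p.2.2 - p.2.1)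

lemma exists_energyPhase_eq_mul_int {c : ℝ} {ψ : G → ℝ} (hψ : ∀ j, ∃ m : ℤ, ψ j = c * m)
    (p : G × G × G) : ∃ m : ℤ, energyPhase ψ p = c * m := by
  obtain ⟨m₁, h₁⟩ := hψ p.1
  obtain ⟨m₂, h₂⟩ := hψ (p.2.2 - p.1)
  obtain ⟨m₃, h₃⟩ := hψ p.2.1
  obtain ⟨m₄, h₄⟩ := hψ (p.2.2 - p.2.1)
  exact ⟨m₁ + m₂ - m₃ - m₄, by simp only [energyPhase, h₁, h₂, h₃, h₄]; push_cast; ring⟩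

variable [Fintype G]

noncomputable def addConv (f g : G → ℂ) (z : G) : ℂ := ∑ x, f x * g (z - x)

noncomputable def convEnergy (f : G → ℂ) : ℝ := ∑ z, ‖addConv f f z‖ ^ 2

lemma convEnergy_eq_sum (f : G → ℂ) :
    (convEnergy f : ℂ) =
      ∑ p : G × G × G, f p.1 * f (p.2.2 - p.1) * conj (f p.2.1 * f (p.2.2 - p.2.1)) := by
  simp only [convEnergy, Fintype.sum_prod_type]
  push_cast
  simp only [← mul_conj', addConv, map_sum, sum_mul_sum]
  rw [sum_comm]
  refine sum_congr rfl fun x _ => ?_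
  rw [sum_comm]

lemma convEnergy_exp_eq_sum_exp_energyPhase (ψ : G → ℝ) (t : ℝ) :
    (convEnergy (fun j => exp (I * t * ψ j)) : ℂ) = ∑ p, exp (I * t * energyPhase ψ p) := by
  rw [convEnergy_eq_sum]
  refine sum_congr rfl fun p _ => ?_
  simp only [map_mul, ← exp_conj, map_add, conj_I, conj_ofReal, ← exp_add, energyPhase]
  push_cast
  ring_nf

theorem natCast_mul_ncard_eq_sum_convEnergy (Q : ℕ) {ψ : G → ℝ}
    (hψ : ∀ j, ∃ m : ℤ, ψ j = 2 * π / Q * m) :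
    (Q * {p | ∃ m : ℤ, energyPhase ψ p = 2 * π * m}.ncard : ℝ)
      = ∑ n ∈ range Q, convEnergy (fun j => exp (I * n * ψ j)) := by
  have hexp := fun n : ℕ => convEnergy_exp_eq_sum_exp_energyPhase ψ n
  push_cast at hexp
  have h := natCast_mul_ncard_eq_sum_exp Q _ (exists_energyPhase_eq_mul_int hψ)
  rw [sum_congr rfl fun n _ => (hexp n).symm] at h
  exact_mod_cast h

end Convolution

namespace ZMod

variable {N : ℕ} [NeZero N]

lemma dftN_eq_inv_mul_dft (g : ZMod N → ℂ) (k : ZMod N) :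
    dftN N g k = (N : ℂ)⁻¹ * 𝓕 g k := by
  rw [dftN, one_div, dft_apply]
  congr 1
  refine sum_congr rfl fun j _ => ?_
  have : -(j * k) = ((-(j.val * k.val : ℤ) : ℤ) : ZMod N) := by
    push_cast
    rw [natCast_zmod_val, natCast_zmod_val]
  rw [this, stdAddChar_coe, smul_eq_mul, mul_comm]
  congr 2
  push_cast
  ring

lemma normAN_eq_inv_mul_sum_norm_dft (g : ZMod N → ℂ) :
    normAN N g = (N : ℝ)⁻¹ * ∑ k, ‖𝓕 g k‖ := by
  simp [normAN, dftN_eq_inv_mul_dft, mul_sum]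

lemma conj_stdAddChar (a : ZMod N) : conj (stdAddChar a) = stdAddChar (-a) := by
  rw [stdAddChar_apply, stdAddChar_apply, AddChar.map_neg_eq_inv, ← Circle.coe_inv_eq_conj]

lemma sum_dft_mul_conj_dft (Φ : ZMod N → ℂ) :
    ∑ k, 𝓕 Φ k * conj (𝓕 Φ k) = N * ∑ j, Φ j * conj (Φ j) := by
  have inversion : ∀ j, ∑ k, stdAddChar (j * k) * 𝓕 Φ k = N * Φ j := fun j => by
    simpa [dft_apply, mul_comm _ j] using congrFun (dft_dft Φ) (-j)
  have expand : ∀ k,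
      𝓕 Φ k * conj (𝓕 Φ k) = ∑ j, Φ j * conj (stdAddChar (j * k) * 𝓕 Φ k) := by
    intro k
    conv_lhs => arg 1; rw [dft_apply]
    simp only [map_mul, conj_stdAddChar, smul_eq_mul, sum_mul]
    exact sum_congr rfl fun j _ => by ring
  calc ∑ k, 𝓕 Φ k * conj (𝓕 Φ k)
      = ∑ j, Φ j * conj (∑ k, stdAddChar (j * k) * 𝓕 Φ k) := by
        simp only [expand, map_sum, mul_sum]
        exact sum_comm
    _ = N * ∑ j, Φ j * conj (Φ j) := by
        simp only [inversion, map_mul, map_natCast, mul_sum]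
        exact sum_congr rfl fun j _ => by ring

theorem sum_norm_sq_dft (Φ : ZMod N → ℂ) : ∑ k, ‖𝓕 Φ k‖ ^ 2 = N * ∑ j, ‖Φ j‖ ^ 2 := by
  have := sum_dft_mul_conj_dft Φ
  simp only [mul_conj, normSq_eq_norm_sq] at this
  exact_mod_cast this

lemma dft_addConv (Φ Ψ : ZMod N → ℂ) (k : ZMod N) :
    𝓕 (addConv Φ Ψ) k = 𝓕 Φ k * 𝓕 Ψ k := by
  simp only [dft_apply, addConv, smul_eq_mul]
  rw [sum_mul_sum]
  simp only [mul_sum]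
  rw [sum_comm]
  refine sum_congr rfl fun x _ => ?_
  rw [← Equiv.sum_comp (Equiv.addRight x)]
  refine sum_congr rfl fun w _ => ?_
  simp only [Equiv.coe_addRight, add_sub_cancel_right, add_mul, neg_add, AddChar.map_add_eq_mul]
  ring

lemma natCast_mul_convEnergy_eq_sum_norm_dft_pow_four (f : ZMod N → ℂ) :
    N * convEnergy f = ∑ k, ‖𝓕 f k‖ ^ 4 := by
  rw [convEnergy, ← sum_norm_sq_dft]
  refine sum_congr rfl fun k _ => ?_
  rw [dft_addConv, norm_mul, ← sq, ← pow_mul]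

theorem natCast_pow_three_le_normAN_sq_mul_convEnergy (f : ZMod N → ℂ) (hf : ∀ j, ‖f j‖ = 1) :
    (N : ℝ) ^ 3 ≤ normAN N f ^ 2 * convEnergy f := by
  have hN : (0 : ℝ) < N := Nat.cast_pos.2 (Nat.pos_of_ne_zero (NeZero.ne N))
  have hL2 : ∑ k, ‖𝓕 f k‖ ^ 2 = (N : ℝ) ^ 2 := by
    simp only [sum_norm_sq_dft, hf, one_pow, sum_const, card_univ, ZMod.card, nsmul_eq_mul]
    ring
  have hL1 : ∑ k, ‖𝓕 f k‖ = N * normAN N f := by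
    rw [normAN_eq_inv_mul_sum_norm_dft, mul_inv_cancel_left₀ hN.ne']
  have key := sum_sq_pow_three_le_sq_sum_mul_sum_pow_four univ fun k _ => norm_nonneg (𝓕 f k)
  rw [hL2, hL1, ← natCast_mul_convEnergy_eq_sum_norm_dft_pow_four] at key
  refine le_of_mul_le_mul_left ?_ (pow_pos hN 3)
  calc (N : ℝ) ^ 3 * N ^ 3 = (N ^ 2) ^ 3 := by ring
    _ ≤ (N * normAN N f) ^ 2 * (N * convEnergy f) := key
    _ = N ^ 3 * (normAN N f ^ 2 * convEnergy f) := by ring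

theorem natCast_pow_three_le_sq_mul_convEnergy {f : ZMod N → ℂ} (hf : ∀ j, ‖f j‖ = 1) {M : ℝ}
    (hM : normAN N f ≤ M) : (N : ℝ) ^ 3 ≤ M ^ 2 * convEnergy f := by
  refine (natCast_pow_three_le_normAN_sq_mul_convEnergy f hf).trans ?_
  gcongr
  exacts [sum_nonneg fun _ _ => sq_nonneg _, sum_nonneg fun _ _ => norm_nonneg _]

end ZMod

theorem level_set_measure_lower_bound_general
    (N : ℕ) [NeZero N] (Q : ℤ) (hQ : 1 ≤ Q)
    (ψ : ZMod N → ℝ) (hψ : ∀ j : ZMod N, ∃ m : ℤ, ψ j = (2 * π / (Q : ℝ)) * m)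
    (M : ℝ)
    (hbound : ∀ n : ℤ, 0 ≤ n → n ≤ Q - 1 →
      normAN N (fun j : ZMod N => Complex.exp (Complex.I * (n : ℂ) * (ψ j : ℂ))) ≤ M) :
    1 / M ^ 2 ≤
      (({p : ZMod N × ZMod N × ZMod N | ∃ m : ℤ,
          ψ p.1 + ψ (p.2.2 - p.1) - ψ p.2.1 - ψ (p.2.2 - p.2.1) = 2 * π * m}).ncard : ℝ)
        / (N : ℝ) ^ 3 := by
  lift Q to ℕ using by omega
  simp only [Int.cast_natCast] at hψ
  have hN : (0 : ℝ) < N ^ 3 := pow_pos (Nat.cast_pos.2 (Nat.pos_of_ne_zero (NeZero.ne N))) 3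
  have hQ : (0 : ℝ) < Q := by exact_mod_cast hQ
  have henergy : ∀ n ∈ range Q,
      (N : ℝ) ^ 3 ≤ M ^ 2 * convEnergy (fun j => exp (I * n * ψ j)) := fun n hn =>
    natCast_pow_three_le_sq_mul_convEnergy
      (fun j => by simpa [mul_assoc] using norm_exp_I_mul_ofReal (n * ψ j))
      (by simpa using hbound n n.cast_nonneg (by rw [mem_range] at hn; omega))
  have hcard : (N : ℝ) ^ 3 ≤ M ^ 2 * {p | ∃ m : ℤ, energyPhase ψ p = 2 * π * m}.ncard := by
    refine le_of_mul_le_mul_left ?_ hQ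
    calc Q * (N : ℝ) ^ 3 = ∑ n ∈ range Q, (N : ℝ) ^ 3 := by simp
      _ ≤ ∑ n ∈ range Q, M ^ 2 * convEnergy (fun j => exp (I * n * ψ j)) := sum_le_sum henergy
      _ = Q * (M ^ 2 * {p | ∃ m : ℤ, energyPhase ψ p = 2 * π * m}.ncard) := by
        rw [← mul_sum, ← natCast_mul_ncard_eq_sum_convEnergy Q hψ]; ring
  rw [div_le_div_iff₀ (by nlinarith) hN, one_mul, mul_comm]
  exact hcard

theorem level_set_measure_lower_bound
    (N : ℕ) [NeZero N] (Q : ℤ) (hQ : 1 ≤ Q)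
    (ψ : ZMod N → ℝ) (hψ : ∀ j : ZMod N, ∃ m : ℤ, ψ j = (2 * π / (Q : ℝ)) * m)
    (M : ℝ) (hM : 1 ≤ M)
    (hbound : ∀ n : ℤ, 0 ≤ n → n ≤ Q - 1 →
      normAN N (fun j : ZMod N => Complex.exp (Complex.I * (n : ℂ) * (ψ j : ℂ))) ≤ M) :
    1 / M ^ 2 ≤
      (({p : ZMod N × ZMod N × ZMod N | ∃ m : ℤ,
          ψ p.1 + ψ (p.2.2 - p.1) - ψ p.2.1 - ψ (p.2.2 - p.2.1) = 2 * π * m}).ncard : ℝ)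
        / (N : ℝ) ^ 3 :=
  level_set_measure_lower_bound_general N Q hQ ψ hψ M hbound
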